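/- arXiv:1701.07822 — 4 statements merged into one kernel-verified Lean document; each statement's English description precedes it below -/
import Mathlib

section
/- Let n ≥ 1 and consider items 1,…,n with real profits p_i ≥ 0 and real weights w_i > 0, sorted so that p_1/w_1 ≥ p_2/w_2 ≥ … ≥ p_n/w_n, and let W ≥ 0 be a real capacity. Suppose k is the smallest index with ∑_{i=1}^{k} w_i > W. Then every set S ⊆ {1,…,n} with ∑_{i∈S} w_i ≤ W satisfies ∑_{i∈S} p_i ≤ ∑_{i=1}^{k} p_i. -/
open Finset

/-- Exchange argument: replacing the items of `S \ T` by those of `T \ S` trades weight at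
profit rate at most `r` for at least as much weight at profit rate at least `r`. -/
theorem Finset.sum_le_sum_of_profit_rate_threshold {ι R : Type*} [DecidableEq ι] [Ring R]
    [PartialOrder R] [IsOrderedRing R] {S T : Finset ι} {p w : ι → R} {r : R} (hr : 0 ≤ r)
    (hT : ∀ i ∈ T \ S, r * w i ≤ p i) (hS : ∀ i ∈ S \ T, p i ≤ r * w i)
    (hw : ∑ i ∈ S, w i ≤ ∑ i ∈ T, w i) :
    ∑ i ∈ S, p i ≤ ∑ i ∈ T, p i := by
  rw [← sum_sdiff_le_sum_sdiff] at hw ⊢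
  calc ∑ i ∈ S \ T, p i
      ≤ r * ∑ i ∈ S \ T, w i := mul_sum (S \ T) w r ▸ sum_le_sum hS
    _ ≤ r * ∑ i ∈ T \ S, w i := mul_le_mul_of_nonneg_left hw hr
    _ ≤ ∑ i ∈ T \ S, p i := mul_sum (T \ S) w r ▸ sum_le_sum hT

theorem knapsack_prefix_bound_general (n : ℕ) (p w : Fin n → ℝ)
    (hp : ∀ i, 0 ≤ p i) (hw : ∀ i, 0 < w i)
    (hsort : ∀ i j : Fin n, i ≤ j → p j / w j ≤ p i / w i)
    (W : ℝ)
    (k : Fin n)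
    (hk : W < ∑ i ∈ Finset.Iic k, w i)
    (S : Finset (Fin n)) (hS : ∑ i ∈ S, w i ≤ W) :
    ∑ i ∈ S, p i ≤ ∑ i ∈ Finset.Iic k, p i := by
  refine sum_le_sum_of_profit_rate_threshold (r := p k / w k)
    (div_nonneg (hp k) (hw k).le) (fun i hi ↦ ?_) (fun i hi ↦ ?_) (hS.trans hk.le)
  · have hik : i ≤ k := mem_Iic.1 (mem_sdiff.1 hi).1
    exact (le_div_iff₀ (hw i)).1 (hsort i k hik)
  · have hki : k < i := by simpa using (mem_sdiff.1 hi).2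
    exact (div_le_iff₀ (hw i)).1 (hsort k i hki.le)

/-- Greedy/LP-relaxation bound for the knapsack problem: the total profit of the
prefix of items up to and including the break item `k` upper-bounds the profit of
every feasible set. -/
theorem knapsack_prefix_bound (n : ℕ) (hn : 1 ≤ n) (p w : Fin n → ℝ)
    (hp : ∀ i, 0 ≤ p i) (hw : ∀ i, 0 < w i)
    (hsort : ∀ i j : Fin n, i ≤ j → p j / w j ≤ p i / w i)
    (W : ℝ) (hW : 0 ≤ W)
    (k : Fin n)
    (hk : W < ∑ i ∈ Finset.Iic k, w i)
    (hkmin : ∀ j : Fin n, j < k → ∑ i ∈ Finset.Iic j, w i ≤ W)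
    (S : Finset (Fin n)) (hS : ∑ i ∈ S, w i ≤ W) :
    ∑ i ∈ S, p i ≤ ∑ i ∈ Finset.Iic k, p i :=
  knapsack_prefix_bound_general n p w hp hw hsort W k hk S hS
end

section
/- Let n ≥ 1 and consider items 1,…,n with real profits p_i ≥ 0 and real weights w_i satisfying 0 < w_i ≤ W, sorted so that p_1/w_1 ≥ p_2/w_2 ≥ … ≥ p_n/w_n, where W is the real capacity. Suppose k is the smallest index with ∑_{i=1}^{k} w_i > W. Then max{ max_{1≤i≤n} p_i , ∑_{i=1}^{k-1} p_i } ≥ (1/2) · max{ ∑_{i∈S} p_i : S ⊆ {1,…,n}, ∑_{i∈S} w_i ≤ W }. -/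
/-!
Let `k` be the break item and `r = p k / w k`. Every item before `k` has ratio at least `r` and
every item after it at most `r`, so exchanging items between a feasible set `S` and the prefix
`Iic k`, which weighs more than `S`, can only lose profit: `∑ S p ≤ ∑ (Iic k) p`. The latter is
the greedy prefix `Iio k` plus the single item `k`, each at most the greedy answer.
-/

open Finset

section Exchange

variable {ι R : Type*} [DecidableEq ι] [CommRing R] [LinearOrder R] [IsStrictOrderedRing R]

theorem sum_le_sum_of_ratio_le_of_weight_le {S A : Finset ι} {p w : ι → R} {r : R}
    (hr : 0 ≤ r) (hSA : ∀ i ∈ S \ A, p i ≤ r * w i) (hAS : ∀ i ∈ A \ S, r * w i ≤ p i)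
    (hw : ∑ i ∈ S, w i ≤ ∑ i ∈ A, w i) :
    ∑ i ∈ S, p i ≤ ∑ i ∈ A, p i := by
  rw [← sum_sdiff_le_sum_sdiff] at hw ⊢
  calc ∑ i ∈ S \ A, p i ≤ ∑ i ∈ S \ A, r * w i := sum_le_sum hSA
    _ = r * ∑ i ∈ S \ A, w i := (mul_sum ..).symm
    _ ≤ r * ∑ i ∈ A \ S, w i := mul_le_mul_of_nonneg_left hw hr
    _ = ∑ i ∈ A \ S, r * w i := mul_sum ..
    _ ≤ ∑ i ∈ A \ S, p i := sum_le_sum hAS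

end Exchange

section Greedy

variable {ι : Type*} [LinearOrder ι] [LocallyFiniteOrderBot ι] {p w : ι → ℝ}

theorem sum_le_sum_Iic_of_antitone_ratio (hw : ∀ i, 0 < w i)
    (hsort : Antitone fun i => p i / w i) {k : ι} (hpk : 0 ≤ p k) {S : Finset ι}
    (hS : ∑ i ∈ S, w i ≤ ∑ i ∈ Iic k, w i) :
    ∑ i ∈ S, p i ≤ ∑ i ∈ Iic k, p i := by
  refine sum_le_sum_of_ratio_le_of_weight_le (div_nonneg hpk (hw k).le) ?_ ?_ hS
  · intro i hi
    have hki : k ≤ i := (not_le.mp (mem_Iic.not.mp (mem_sdiff.mp hi).2)).le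
    exact (div_le_iff₀ (hw i)).mp (hsort hki)
  · intro i hi
    exact (le_div_iff₀ (hw i)).mp (hsort (mem_Iic.mp (mem_sdiff.mp hi).1))

end Greedy

/-- The greedy algorithm for the knapsack problem (take the better of the greedy
prefix before the break item `k` and the single most profitable item) is a
`1/2`-approximation. -/
theorem knapsack_greedy_half_approx (n : ℕ) (hn : 1 ≤ n) (W : ℝ) (p w : Fin n → ℝ)
    (hp : ∀ i, 0 ≤ p i) (hw : ∀ i, 0 < w i ∧ w i ≤ W)
    (hsort : ∀ i j : Fin n, i ≤ j → p j / w j ≤ p i / w i)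
    (k : Fin n)
    (hk : W < ∑ i ∈ Finset.Iic k, w i) :
    (1 / 2) * ((Finset.univ.powerset.filter fun S : Finset (Fin n) => ∑ i ∈ S, w i ≤ W).sup'
        ⟨∅, by
          simp only [Finset.mem_filter, Finset.mem_powerset, Finset.empty_subset,
            Finset.sum_empty, true_and]
          exact le_trans (hw ⟨0, hn⟩).1.le (hw ⟨0, hn⟩).2⟩
        fun S => ∑ i ∈ S, p i)
      ≤ max ((Finset.univ : Finset (Fin n)).sup' ⟨⟨0, hn⟩, Finset.mem_univ _⟩ p)
          (∑ i ∈ Finset.Iio k, p i) := by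
  set greedy := max ((univ : Finset (Fin n)).sup' ⟨⟨0, hn⟩, mem_univ _⟩ p) (∑ i ∈ Iio k, p i)
  have hbreak : ∑ i ∈ Iic k, p i ≤ 2 * greedy := by
    rw [← sum_Iio_add_eq_sum_Iic, two_mul]
    exact add_le_add (le_max_right _ _) (le_max_of_le_left (le_sup' p (mem_univ k)))
  rw [one_div, inv_mul_le_iff₀ two_pos]
  refine sup'_le _ _ fun S hS => ?_
  have hSW : ∑ i ∈ S, w i ≤ W := (mem_filter.mp hS).2
  calc ∑ i ∈ S, p i ≤ ∑ i ∈ Iic k, p i :=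
        sum_le_sum_Iic_of_antitone_ratio (fun i => (hw i).1) (fun i j hij => hsort i j hij)
          (hp k) (hSW.trans hk.le)
    _ ≤ 2 * greedy := hbreak
end

section
/- Let T be a nonempty finite index set, let g_t(λ) = c_t + λ·d_t (c_t, d_t ∈ ℝ) be affine functions for t ∈ T, and let φ(λ) = max_{t∈T} g_t(λ). Assume φ(λ) > 0 for all λ ∈ ℝ, and let a, b ∈ ℝ. Then there exist real numbers λ₁ ≤ λ₂ such that the function f(λ) = (a + λ·b)/φ(λ) is monotone on (−∞, λ₁], monotone on [λ₁, λ₂], and monotone on [λ₂, +∞). -/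
open Set

/-!
The envelope `φ` is convex and positive, so on the half-line where the numerator `ℓ` is
nonnegative, the superlevel sets `{r ≤ ℓ / φ} = {r φ - ℓ ≤ 0}` (for `r > 0`) are convex:
there `f = ℓ / φ` is quasiconcave, and symmetrically `-f` is quasiconcave where `ℓ ≤ 0`.
A continuous quasiconcave function on a closed half-line increases up to a maximum point
and is monotone afterwards. The two half-lines meet at the zero of `ℓ`, where `f` increases
on both sides (decreases on both sides if `b < 0`), so the two pieces adjacent to it merge
and at most three monotone pieces remain. If `b = 0`, the sign of `ℓ` is constant and one
of `f`, `-f` is quasiconcave on all of `ℝ`, which leaves at most two pieces.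
-/

def HasThreeMonotonePieces (f : ℝ → ℝ) : Prop :=
  ∃ l₁ l₂ : ℝ, l₁ ≤ l₂ ∧
    (MonotoneOn f (Iic l₁) ∨ AntitoneOn f (Iic l₁)) ∧
    (MonotoneOn f (Icc l₁ l₂) ∨ AntitoneOn f (Icc l₁ l₂)) ∧
    (MonotoneOn f (Ici l₂) ∨ AntitoneOn f (Ici l₂))

theorem HasThreeMonotonePieces.neg {f : ℝ → ℝ} (h : HasThreeMonotonePieces f) :
    HasThreeMonotonePieces fun x => -f x := by
  obtain ⟨l₁, l₂, hl, h₁, h₂, h₃⟩ := h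
  exact ⟨l₁, l₂, hl, h₁.symm.imp AntitoneOn.neg MonotoneOn.neg,
    h₂.symm.imp AntitoneOn.neg MonotoneOn.neg, h₃.symm.imp AntitoneOn.neg MonotoneOn.neg⟩

theorem ConvexOn.finset_sup' {𝕜 E β ι : Type*} [Semiring 𝕜] [PartialOrder 𝕜]
    [AddCommMonoid E] [SMul 𝕜 E] [AddCommMonoid β] [LinearOrder β] [IsOrderedAddMonoid β]
    [Module 𝕜 β] [PosSMulStrictMono 𝕜 β] {s : Set E} {t : Finset ι} (H : t.Nonempty)
    {f : ι → E → β} (hf : ∀ i ∈ t, ConvexOn 𝕜 s (f i)) : ConvexOn 𝕜 s (t.sup' H f) :=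
  Finset.sup'_induction H f (fun _ h₁ _ h₂ => h₁.sup h₂) hf

theorem ConcaveOn.quasiconcaveOn_div {E : Type*} [AddCommMonoid E] [Module ℝ E] {s : Set E}
    {ℓ φ : E → ℝ} (hℓ : ConcaveOn ℝ s ℓ) (hφ : ConvexOn ℝ s φ) (hℓ₀ : ∀ x ∈ s, 0 ≤ ℓ x)
    (hφ₀ : ∀ x ∈ s, 0 < φ x) : QuasiconcaveOn ℝ s fun x => ℓ x / φ x := by
  intro r
  rcases le_or_gt r 0 with hr | hr
  · convert hℓ.1 using 1
    exact sep_eq_self_iff_mem_true.2 fun x hx => hr.trans (div_nonneg (hℓ₀ x hx) (hφ₀ x hx).le)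
  · convert (hℓ.sub (hφ.smul hr.le)).convex_ge 0 using 1
    ext x
    simp only [mem_ofPred_eq, Pi.sub_apply, smul_eq_mul, sub_nonneg]
    exact and_congr_right fun hx => le_div_iff₀ (hφ₀ x hx)

namespace QuasiconcaveOn

variable {β : Type*} [LinearOrder β] {s : Set ℝ} {f : ℝ → β} {x y z m : ℝ}

theorem min_le_of_mem_Icc (hf : QuasiconcaveOn ℝ s f) (hx : x ∈ s) (hz : z ∈ s)
    (hy : y ∈ Icc x z) : min (f x) (f z) ≤ f y :=
  ((convex_iff_ordConnected.1 (hf _)).out ⟨hx, min_le_left _ _⟩ ⟨hz, min_le_right _ _⟩ hy).2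

theorem antitoneOn_inter_Ici (hf : QuasiconcaveOn ℝ s f) (hx : x ∈ s) (hxy : x ≤ y)
    (hfxy : f y < f x) : AntitoneOn f (s ∩ Ici y) := by
  intro u hu v hv huv
  have hfvx : f v ≤ f x := by
    by_contra! h
    have := hf.min_le_of_mem_Icc hx hv.1 ⟨hxy, hu.2.trans huv⟩
    exact (min_eq_left h.le ▸ this).not_gt hfxy
  simpa [min_eq_right hfvx] using hf.min_le_of_mem_Icc hx hv.1 ⟨hxy.trans hu.2, huv⟩

theorem monotoneOn_inter_Iic (hf : QuasiconcaveOn ℝ s f) (hy : y ∈ s) (hxy : x ≤ y)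
    (hfxy : f x < f y) : MonotoneOn f (s ∩ Iic x) := by
  intro u hu v hv huv
  have hfuy : f u ≤ f y := by
    by_contra! h
    have := hf.min_le_of_mem_Icc hu.1 hy ⟨huv.trans hv.2, hxy⟩
    exact (min_eq_right h.le ▸ this).not_gt hfxy
  simpa [min_eq_left hfuy] using hf.min_le_of_mem_Icc hu.1 hy ⟨huv, hv.2.trans hxy⟩

theorem monotoneOn_inter_Iic_of_isMaxOn (hf : QuasiconcaveOn ℝ s f) (hm : m ∈ s)
    (hmax : IsMaxOn f s m) : MonotoneOn f (s ∩ Iic m) := fun u hu v hv huv => by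
  simpa [min_eq_left (hmax hu.1)] using hf.min_le_of_mem_Icc hu.1 hm ⟨huv, hv.2⟩

theorem antitoneOn_inter_Ici_of_isMaxOn (hf : QuasiconcaveOn ℝ s f) (hm : m ∈ s)
    (hmax : IsMaxOn f s m) : AntitoneOn f (s ∩ Ici m) := fun u hu v hv huv => by
  simpa [min_eq_right (hmax hv.1)] using hf.min_le_of_mem_Icc hm hv.1 ⟨hu.2, huv⟩

section Continuous

variable [TopologicalSpace β] [OrderClosedTopology β] {r : ℝ}

theorem monotoneOn_or_antitoneOn_or_exists_isMaxOn (hf : QuasiconcaveOn ℝ s f)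
    (hs : IsClosed s) (hc : ContinuousOn f s) :
    MonotoneOn f s ∨ AntitoneOn f s ∨ ∃ m ∈ s, IsMaxOn f s m := by
  rw [or_iff_not_imp_left, or_iff_not_imp_left]
  intro hmono hanti
  obtain ⟨u, hu, v, hv, huv, hfvu⟩ : ∃ u ∈ s, ∃ v ∈ s, u ≤ v ∧ f v < f u := by
    simpa [MonotoneOn] using hmono
  obtain ⟨p, hp, q, hq, hpq, hfpq⟩ : ∃ p ∈ s, ∃ q ∈ s, p ≤ q ∧ f p < f q := by
    simpa [AntitoneOn] using hanti
  have hanti_v := hf.antitoneOn_inter_Ici hu huv hfvu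
  have hmono_p := hf.monotoneOn_inter_Iic hq hpq hfpq
  have hpv : p ≤ v := by
    by_contra! hvp
    exact (hanti_v ⟨hp, hvp.le⟩ ⟨hq, hvp.le.trans hpq⟩ hpq).not_gt hfpq
  obtain ⟨m, hm, hmax⟩ := (isCompact_Icc.inter_left hs).exists_isMaxOn
    ⟨p, hp, left_mem_Icc.2 hpv⟩ (hc.mono inter_subset_left)
  refine ⟨m, hm.1, fun x hx => ?_⟩
  rcases le_total x p with hxp | hpx
  · exact (hmono_p ⟨hx, hxp⟩ ⟨hp, le_refl p⟩ hxp).trans (hmax ⟨hp, left_mem_Icc.2 hpv⟩)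
  rcases le_total v x with hvx | hxv
  · exact (hanti_v ⟨hv, le_refl v⟩ ⟨hx, hvx⟩ hvx).trans (hmax ⟨hv, right_mem_Icc.2 hpv⟩)
  · exact hmax ⟨hx, hpx, hxv⟩

theorem exists_monotoneOn_Icc_of_Ici (hf : QuasiconcaveOn ℝ (Ici r) f)
    (hc : ContinuousOn f (Ici r)) :
    ∃ m, r ≤ m ∧ MonotoneOn f (Icc r m) ∧ (MonotoneOn f (Ici m) ∨ AntitoneOn f (Ici m)) := by
  rcases hf.monotoneOn_or_antitoneOn_or_exists_isMaxOn isClosed_Ici hc with h | h | ⟨m, hm, hmax⟩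
  · exact ⟨r, le_rfl, h.mono Icc_subset_Ici_self, Or.inl h⟩
  · exact ⟨r, le_rfl, (subsingleton_Icc_of_ge le_rfl).monotoneOn _, Or.inr h⟩
  · refine ⟨m, hm, ?_, Or.inr ?_⟩
    · simpa [Ici_inter_Iic] using hf.monotoneOn_inter_Iic_of_isMaxOn hm hmax
    · simpa [Ici_inter_Ici, max_eq_right (mem_Ici.1 hm)] using
        hf.antitoneOn_inter_Ici_of_isMaxOn hm hmax

theorem exists_antitoneOn_Icc_of_Iic (hf : QuasiconcaveOn ℝ (Iic r) f)
    (hc : ContinuousOn f (Iic r)) :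
    ∃ m, m ≤ r ∧ AntitoneOn f (Icc m r) ∧ (MonotoneOn f (Iic m) ∨ AntitoneOn f (Iic m)) := by
  rcases hf.monotoneOn_or_antitoneOn_or_exists_isMaxOn isClosed_Iic hc with h | h | ⟨m, hm, hmax⟩
  · exact ⟨r, le_rfl, (subsingleton_Icc_of_ge le_rfl).antitoneOn _, Or.inl h⟩
  · exact ⟨r, le_rfl, h.mono Icc_subset_Iic_self, Or.inr h⟩
  · refine ⟨m, hm, ?_, Or.inl ?_⟩
    · simpa [Iic_inter_Ici] using hf.antitoneOn_inter_Ici_of_isMaxOn hm hmax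
    · simpa [Iic_inter_Iic, min_eq_right (mem_Iic.1 hm)] using
        hf.monotoneOn_inter_Iic_of_isMaxOn hm hmax

end Continuous

end QuasiconcaveOn

theorem QuasiconcaveOn.hasThreeMonotonePieces {f : ℝ → ℝ} (hf : QuasiconcaveOn ℝ univ f)
    (hc : Continuous f) : HasThreeMonotonePieces f := by
  rcases hf.monotoneOn_or_antitoneOn_or_exists_isMaxOn isClosed_univ hc.continuousOn with
    h | h | ⟨m, -, hmax⟩
  · exact ⟨0, 0, le_rfl, .inl (h.mono (subset_univ _)), .inl (h.mono (subset_univ _)),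
      .inl (h.mono (subset_univ _))⟩
  · exact ⟨0, 0, le_rfl, .inr (h.mono (subset_univ _)), .inr (h.mono (subset_univ _)),
      .inr (h.mono (subset_univ _))⟩
  · have hmono : MonotoneOn f (Iic m) := by
      simpa using hf.monotoneOn_inter_Iic_of_isMaxOn (mem_univ m) hmax
    exact ⟨m, m, le_rfl, .inl hmono, .inl (hmono.mono Icc_subset_Iic_self),
      .inr (by simpa using hf.antitoneOn_inter_Ici_of_isMaxOn (mem_univ m) hmax)⟩

theorem hasThreeMonotonePieces_of_quasiconcaveOn_Iic_neg_of_quasiconcaveOn_Ici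
    {f : ℝ → ℝ} {r : ℝ} (hc : Continuous f) (hl : QuasiconcaveOn ℝ (Iic r) fun x => -f x)
    (hr : QuasiconcaveOn ℝ (Ici r) f) : HasThreeMonotonePieces f := by
  obtain ⟨m₁, hm₁, hanti₁, hout₁⟩ := hl.exists_antitoneOn_Icc_of_Iic hc.neg.continuousOn
  obtain ⟨m₂, hm₂, hmono₂, hout₂⟩ := hr.exists_monotoneOn_Icc_of_Ici hc.continuousOn
  have hmono₁ : MonotoneOn f (Icc m₁ r) := by simpa using hanti₁.neg
  refine ⟨m₁, m₂, hm₁.trans hm₂, ?_, .inl ?_, hout₂⟩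
  · simpa using hout₁.symm.imp AntitoneOn.neg MonotoneOn.neg
  · rw [← Icc_union_Icc_eq_Icc hm₁ hm₂]
    exact hmono₁.union_right hmono₂ (isGreatest_Icc hm₁) (isLeast_Icc hm₂)

theorem hasThreeMonotonePieces_affine_div {φ : ℝ → ℝ} (hφ : ConvexOn ℝ univ φ)
    (hpos : ∀ x, 0 < φ x) (a b : ℝ) : HasThreeMonotonePieces fun x => (a + x * b) / φ x := by
  wlog hab : 0 < b ∨ b = 0 ∧ 0 ≤ a generalizing a b
  · have hneg : 0 < -b ∨ -b = 0 ∧ 0 ≤ -a := by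
      rcases lt_trichotomy b 0 with hb | rfl | hb
      · exact .inl (neg_pos.2 hb)
      · exact .inr ⟨neg_zero, neg_nonneg.2 (le_of_not_ge fun ha => hab (.inr ⟨rfl, ha⟩))⟩
      · exact absurd (.inl hb) hab
    convert (this (-a) (-b) hneg).neg using 2 with x
    ring
  have hc : Continuous fun x => (a + x * b) / φ x :=
    (by fun_prop : Continuous fun x : ℝ => a + x * b).div hφ.locallyLipschitz.continuous
      fun x => (hpos x).ne'
  have hℓ (p q : ℝ) (s : Set ℝ) (hs : Convex ℝ s) : ConcaveOn ℝ s fun x => p + x * q :=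
    (concaveOn_const p hs).add ((LinearMap.mulRight ℝ q).concaveOn hs)
  have hφs (s : Set ℝ) (hs : Convex ℝ s) : ConvexOn ℝ s φ := hφ.subset (subset_univ s) hs
  rcases hab with hb | ⟨rfl, ha⟩
  · refine hasThreeMonotonePieces_of_quasiconcaveOn_Iic_neg_of_quasiconcaveOn_Ici (r := -a / b)
      hc ?_ ?_
    · have hneg : (fun x => -((a + x * b) / φ x)) = fun x => (-a + x * -b) / φ x := by
        funext x
        ring
      rw [hneg]
      refine ConcaveOn.quasiconcaveOn_div (hℓ (-a) (-b) _ (convex_Iic _)) (hφs _ (convex_Iic _))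
        (fun x hx => ?_) fun x _ => hpos x
      linarith [(le_div_iff₀ hb).1 hx]
    · refine ConcaveOn.quasiconcaveOn_div (hℓ a b _ (convex_Ici _)) (hφs _ (convex_Ici _))
        (fun x hx => ?_) fun x _ => hpos x
      linarith [(div_le_iff₀ hb).1 hx]
  · exact ConcaveOn.quasiconcaveOn_div (hℓ a 0 _ convex_univ) (hφs _ convex_univ)
      (fun x _ => by simpa using ha) (fun x _ => hpos x) |>.hasThreeMonotonePieces hc

/-- If `φ` is the everywhere-positive upper envelope (pointwise maximum) of a nonempty
finite family of affine functions, then the ratio `f(λ) = (a + λ·b)/φ(λ)` is piecewise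
monotone with at most three monotone pieces: there are `λ₁ ≤ λ₂` such that `f` is
monotone on `(−∞, λ₁]`, on `[λ₁, λ₂]`, and on `[λ₂, +∞)`. -/
theorem affine_over_envelope_three_monotone_pieces
    {T : Type*} [Fintype T] [Nonempty T] (c d : T → ℝ)
    (φ : ℝ → ℝ)
    (hφ : ∀ x : ℝ, φ x = Finset.univ.sup' Finset.univ_nonempty fun t : T => c t + x * d t)
    (hpos : ∀ x : ℝ, 0 < φ x) (a b : ℝ) :
    ∃ lam₁ lam₂ : ℝ, lam₁ ≤ lam₂ ∧
      (MonotoneOn (fun lam => (a + lam * b) / φ lam) (Set.Iic lam₁) ∨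
        AntitoneOn (fun lam => (a + lam * b) / φ lam) (Set.Iic lam₁)) ∧
      (MonotoneOn (fun lam => (a + lam * b) / φ lam) (Set.Icc lam₁ lam₂) ∨
        AntitoneOn (fun lam => (a + lam * b) / φ lam) (Set.Icc lam₁ lam₂)) ∧
      (MonotoneOn (fun lam => (a + lam * b) / φ lam) (Set.Ici lam₂) ∨
        AntitoneOn (fun lam => (a + lam * b) / φ lam) (Set.Ici lam₂)) := by
  have hφ_eq : φ = Finset.univ.sup' Finset.univ_nonempty fun t x => c t + x * d t := by
    funext x
    rw [hφ x, Finset.sup'_apply]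
  have hconv : ConvexOn ℝ univ φ := hφ_eq ▸ ConvexOn.finset_sup' _ fun t _ =>
    (convexOn_const (c t) convex_univ).add ((LinearMap.mulRight ℝ (d t)).convexOn convex_univ)
  exact hasThreeMonotonePieces_affine_div hconv hpos a b
end

section
/- Let T be a nonempty finite index set, let g_t(λ) = c_t + λ·d_t (c_t, d_t ∈ ℝ) be affine functions for t ∈ T, and let φ(λ) = max_{t∈T} g_t(λ). Assume φ(λ) > 0 for all λ ∈ ℝ, and let a, b ∈ ℝ and c > 0. Then for every integer v, the set { λ ∈ ℝ : ⌊ c·(a + λ·b)/φ(λ) ⌋ = v } is the union of at most three order-connected subsets (intervals) of ℝ. -/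
/-- A solution set of a non-strict affine inequality is order-connected. -/
lemma affine_le_ordConnected (p q r s : ℝ) :
    Set.OrdConnected {x : ℝ | p + x*q ≤ r + x*s} := by
  constructor
  intro x hx y hy z hz
  simp only [Set.mem_setOf_eq] at *
  rcases le_total q s with h | h
  · nlinarith [mul_nonneg (sub_nonneg.2 hz.1) (sub_nonneg.2 h)]
  · nlinarith [mul_nonneg (sub_nonneg.2 hz.2) (sub_nonneg.2 h)]

/-- A solution set of a strict affine inequality is order-connected. -/
lemma affine_lt_ordConnected (p q r s : ℝ) :
    Set.OrdConnected {x : ℝ | p + x*q < r + x*s} := by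
  constructor
  intro x hx y hy z hz
  simp only [Set.mem_setOf_eq] at *
  rcases le_total q s with h | h
  · nlinarith [mul_nonneg (sub_nonneg.2 hz.1) (sub_nonneg.2 h)]
  · nlinarith [mul_nonneg (sub_nonneg.2 hz.2) (sub_nonneg.2 h)]

/-- The intersection of an order-connected set with the complement of an
order-connected set is a union of (at most) three order-connected sets. -/
lemma inter_compl_two (I J : Set ℝ) (hI : I.OrdConnected) (hJ : J.OrdConnected) :
    ∃ A B C : Set ℝ, A.OrdConnected ∧ B.OrdConnected ∧ C.OrdConnected ∧
      I ∩ Jᶜ = A ∪ B ∪ C := by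
  refine ⟨I ∩ {x | ∀ j ∈ J, x < j}, I ∩ {x | ∀ j ∈ J, j < x}, ∅, ?_, ?_,
    Set.ordConnected_empty, ?_⟩
  · exact hI.inter ⟨fun x hx y hy z hz j hj => lt_of_le_of_lt hz.2 (hy j hj)⟩
  · exact hI.inter ⟨fun x hx y hy z hz j hj => lt_of_lt_of_le (hx j hj) hz.1⟩
  · rw [Set.union_empty, ← Set.inter_union_distrib_left]
    congr 1
    ext x
    simp only [Set.mem_compl_iff, Set.mem_union, Set.mem_setOf_eq]
    constructor
    · intro hx
      by_contra h
      push_neg at h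
      obtain ⟨⟨j1, hj1, hj1x⟩, ⟨j2, hj2, hj2x⟩⟩ := h
      exact hx (hJ.out hj1 hj2 ⟨hj1x, hj2x⟩)
    · rintro (h | h) hx
      · exact lt_irrefl x (h x hx)
      · exact lt_irrefl x (h x hx)

/-- If `φ` is the everywhere-positive upper envelope (pointwise maximum) of a nonempty
finite family of affine functions, then for every integer `v` the level set
`{λ : ⌊c·(a + λ·b)/φ(λ)⌋ = v}` of the rounded scaled profit is the union of at most
three order-connected subsets (intervals) of `ℝ`. -/
theorem floor_scaled_profit_level_set_three_intervals
    {T : Type*} [Fintype T] [Nonempty T] (cT dT : T → ℝ)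
    (φ : ℝ → ℝ)
    (hφ : ∀ x : ℝ, φ x = Finset.univ.sup' Finset.univ_nonempty fun t : T => cT t + x * dT t)
    (hpos : ∀ x : ℝ, 0 < φ x) (a b c : ℝ) (hc : 0 < c) :
    ∀ v : ℤ, ∃ A B C : Set ℝ, A.OrdConnected ∧ B.OrdConnected ∧ C.OrdConnected ∧
      {lam : ℝ | ⌊c * (a + lam * b) / φ lam⌋ = v} = A ∪ B ∪ C := by
  intro v
  have hle : ∀ (lam : ℝ) (t : T), cT t + lam * dT t ≤ φ lam := fun lam t => by
    rw [hφ]; exact Finset.le_sup' (fun t : T => cT t + lam * dT t) (Finset.mem_univ t)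
  have hex : ∀ lam : ℝ, ∃ t : T, φ lam = cT t + lam * dT t := fun lam => by
    obtain ⟨t, -, ht⟩ := Finset.exists_mem_eq_sup' (Finset.univ_nonempty (α := T))
      (fun t : T => cT t + lam * dT t)
    exact ⟨t, by rw [hφ]; exact ht⟩
  have hmem : ∀ lam : ℝ, (⌊c * (a + lam * b) / φ lam⌋ = v) ↔
      ((v : ℝ) * φ lam ≤ c * (a + lam * b) ∧
        c * (a + lam * b) < ((v : ℝ) + 1) * φ lam) := by
    intro lam
    rw [Int.floor_eq_iff, le_div_iff₀ (hpos lam), div_lt_iff₀ (hpos lam)]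
  rcases le_or_gt 0 v with hv | hv
  · -- v ≥ 0 : the set is I ∩ Jᶜ with I = {vφ ≤ N}, J = {(v+1)φ ≤ N}
    have hv0 : (0 : ℝ) ≤ (v : ℝ) := by exact_mod_cast hv
    have hv1 : (0 : ℝ) ≤ (v : ℝ) + 1 := by linarith
    have key : ∀ u : ℝ, 0 ≤ u →
        Set.OrdConnected {lam : ℝ | u * φ lam ≤ c * (a + lam * b)} := by
      intro u hu
      have heq : {lam : ℝ | u * φ lam ≤ c * (a + lam * b)} =
          ⋂ t : T, {lam : ℝ | u * cT t + lam * (u * dT t) ≤ c * a + lam * (c * b)} := by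
        ext lam
        simp only [Set.mem_setOf_eq, Set.mem_iInter]
        constructor
        · intro h t
          have := mul_le_mul_of_nonneg_left (hle lam t) hu
          nlinarith
        · intro h
          obtain ⟨t, ht⟩ := hex lam
          have := h t
          rw [ht]
          nlinarith
      rw [heq]
      exact Set.ordConnected_iInter fun t => affine_le_ordConnected _ _ _ _
    obtain ⟨A, B, C, hA, hB, hC, hABC⟩ := inter_compl_two
      {lam : ℝ | (v : ℝ) * φ lam ≤ c * (a + lam * b)}
      {lam : ℝ | ((v : ℝ) + 1) * φ lam ≤ c * (a + lam * b)}
      (key _ hv0) (key _ hv1)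
    refine ⟨A, B, C, hA, hB, hC, ?_⟩
    rw [← hABC]
    ext lam
    simp only [Set.mem_setOf_eq, Set.mem_inter_iff, Set.mem_compl_iff, hmem, not_le]
  · -- v < 0, so v + 1 ≤ 0 : the set is I ∩ Jᶜ with I = {N < (v+1)φ}, J = {N < vφ}
    have hv0 : (v : ℝ) ≤ 0 := by exact_mod_cast hv.le
    have hv1 : (v : ℝ) + 1 ≤ 0 := by
      have : (v : ℝ) ≤ -1 := by exact_mod_cast (by omega : v ≤ -1)
      linarith
    have key : ∀ u : ℝ, u ≤ 0 →
        Set.OrdConnected {lam : ℝ | c * (a + lam * b) < u * φ lam} := by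
      intro u hu
      have heq : {lam : ℝ | c * (a + lam * b) < u * φ lam} =
          ⋂ t : T, {lam : ℝ | c * a + lam * (c * b) < u * cT t + lam * (u * dT t)} := by
        ext lam
        simp only [Set.mem_setOf_eq, Set.mem_iInter]
        constructor
        · intro h t
          have := mul_le_mul_of_nonpos_left (hle lam t) hu
          nlinarith
        · intro h
          obtain ⟨t, ht⟩ := hex lam
          have := h t
          rw [ht]
          nlinarith
      rw [heq]
      exact Set.ordConnected_iInter fun t => affine_lt_ordConnected _ _ _ _
    obtain ⟨A, B, C, hA, hB, hC, hABC⟩ := inter_compl_two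
      {lam : ℝ | c * (a + lam * b) < ((v : ℝ) + 1) * φ lam}
      {lam : ℝ | c * (a + lam * b) < (v : ℝ) * φ lam}
      (key _ hv1) (key _ hv0)
    refine ⟨A, B, C, hA, hB, hC, ?_⟩
    rw [← hABC]
    ext lam
    simp only [Set.mem_setOf_eq, Set.mem_inter_iff, Set.mem_compl_iff, hmem, not_lt]
    tauto
end
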